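/- arXiv:2601.20153 — 3 statements merged into one kernel-verified Lean document; each statement's English description precedes it below -/
import Mathlib

section
/- For every finite simple graph G without closed twins, G has an ID-code and the ID-number of G is at most the I-number of G plus one, i.e., γ^ID(G) ≤ γ^I(G) + 1. -/
open Finset

namespace SepDom

variable {V : Type*} [Fintype V] [DecidableEq V]

/-- The closed neighborhood `N[v]` of a vertex as a `Finset`. -/
def closedNbhd (G : SimpleGraph V) [DecidableRel G.Adj] (v : V) : Finset V :=
  insert v (G.neighborFinset v)

/-- `C` is a dominating set: `N[v] ∩ C ≠ ∅` for all `v`. -/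
def IsDomSet (G : SimpleGraph V) [DecidableRel G.Adj] (C : Finset V) : Prop :=
  ∀ v : V, (closedNbhd G v ∩ C).Nonempty

/-- `C` is a total-dominating set: `N(v) ∩ C ≠ ∅` for all `v`. -/
def IsTotalDomSet (G : SimpleGraph V) [DecidableRel G.Adj] (C : Finset V) : Prop :=
  ∀ v : V, (G.neighborFinset v ∩ C).Nonempty

/-- `C` is a locating set (L-set): the sets `N(v) ∩ C`, `v ∉ C`, are pairwise distinct. -/
def IsLSet (G : SimpleGraph V) [DecidableRel G.Adj] (C : Finset V) : Prop :=
  ∀ u ∉ C, ∀ v ∉ C, G.neighborFinset u ∩ C = G.neighborFinset v ∩ C → u = v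

/-- `C` is an open-separating set (O-set): the sets `N(v) ∩ C` are pairwise distinct. -/
def IsOSet (G : SimpleGraph V) [DecidableRel G.Adj] (C : Finset V) : Prop :=
  ∀ u v : V, G.neighborFinset u ∩ C = G.neighborFinset v ∩ C → u = v

/-- `C` is a closed-separating set (I-set): the sets `N[v] ∩ C` are pairwise distinct. -/
def IsISet (G : SimpleGraph V) [DecidableRel G.Adj] (C : Finset V) : Prop :=
  ∀ u v : V, closedNbhd G u ∩ C = closedNbhd G v ∩ C → u = v

/-- `C` is a full-separating set (F-set): both open- and closed-separating. -/
def IsFSet (G : SimpleGraph V) [DecidableRel G.Adj] (C : Finset V) : Prop :=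
  IsOSet G C ∧ IsISet G C

/-- `G` has open twins: distinct non-adjacent vertices with equal open neighborhoods. -/
def HasOpenTwins (G : SimpleGraph V) [DecidableRel G.Adj] : Prop :=
  ∃ u v : V, u ≠ v ∧ ¬ G.Adj u v ∧ G.neighborFinset u = G.neighborFinset v

/-- `G` has closed twins: distinct adjacent vertices with equal closed neighborhoods. -/
def HasClosedTwins (G : SimpleGraph V) [DecidableRel G.Adj] : Prop :=
  ∃ u v : V, u ≠ v ∧ G.Adj u v ∧ closedNbhd G u = closedNbhd G v

/-- `G` has an isolated vertex: a vertex with empty open neighborhood. -/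
def HasIsolated (G : SimpleGraph V) [DecidableRel G.Adj] : Prop :=
  ∃ v : V, G.neighborFinset v = ∅

/-- The L-number: minimum cardinality of an L-set. -/
noncomputable def lNum (G : SimpleGraph V) [DecidableRel G.Adj] : ℕ :=
  sInf {n | ∃ C : Finset V, IsLSet G C ∧ C.card = n}

/-- The O-number: minimum cardinality of an O-set. -/
noncomputable def oNum (G : SimpleGraph V) [DecidableRel G.Adj] : ℕ :=
  sInf {n | ∃ C : Finset V, IsOSet G C ∧ C.card = n}

/-- The I-number: minimum cardinality of an I-set. -/
noncomputable def iNum (G : SimpleGraph V) [DecidableRel G.Adj] : ℕ :=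
  sInf {n | ∃ C : Finset V, IsISet G C ∧ C.card = n}

/-- The F-number: minimum cardinality of an F-set. -/
noncomputable def fNum (G : SimpleGraph V) [DecidableRel G.Adj] : ℕ :=
  sInf {n | ∃ C : Finset V, IsFSet G C ∧ C.card = n}

/-- The LD-number: minimum cardinality of an LD-code. -/
noncomputable def ldNum (G : SimpleGraph V) [DecidableRel G.Adj] : ℕ :=
  sInf {n | ∃ C : Finset V, IsDomSet G C ∧ IsLSet G C ∧ C.card = n}

/-- The OD-number: minimum cardinality of an OD-code. -/
noncomputable def odNum (G : SimpleGraph V) [DecidableRel G.Adj] : ℕ :=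
  sInf {n | ∃ C : Finset V, IsDomSet G C ∧ IsOSet G C ∧ C.card = n}

/-- The ID-number: minimum cardinality of an ID-code. -/
noncomputable def idNum (G : SimpleGraph V) [DecidableRel G.Adj] : ℕ :=
  sInf {n | ∃ C : Finset V, IsDomSet G C ∧ IsISet G C ∧ C.card = n}

/-- The FD-number: minimum cardinality of an FD-code. -/
noncomputable def fdNum (G : SimpleGraph V) [DecidableRel G.Adj] : ℕ :=
  sInf {n | ∃ C : Finset V, IsDomSet G C ∧ IsFSet G C ∧ C.card = n}

/-- The LTD-number: minimum cardinality of an LTD-code. -/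
noncomputable def ltdNum (G : SimpleGraph V) [DecidableRel G.Adj] : ℕ :=
  sInf {n | ∃ C : Finset V, IsTotalDomSet G C ∧ IsLSet G C ∧ C.card = n}

/-- The OTD-number: minimum cardinality of an OTD-code. -/
noncomputable def otdNum (G : SimpleGraph V) [DecidableRel G.Adj] : ℕ :=
  sInf {n | ∃ C : Finset V, IsTotalDomSet G C ∧ IsOSet G C ∧ C.card = n}

/-- The ITD-number: minimum cardinality of an ITD-code. -/
noncomputable def itdNum (G : SimpleGraph V) [DecidableRel G.Adj] : ℕ :=
  sInf {n | ∃ C : Finset V, IsTotalDomSet G C ∧ IsISet G C ∧ C.card = n}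

/-- The FTD-number: minimum cardinality of an FTD-code. -/
noncomputable def ftdNum (G : SimpleGraph V) [DecidableRel G.Adj] : ℕ :=
  sInf {n | ∃ C : Finset V, IsTotalDomSet G C ∧ IsFSet G C ∧ C.card = n}

end SepDom

namespace SepDom

variable {V : Type*} [Fintype V] [DecidableEq V] {G : SimpleGraph V} [DecidableRel G.Adj]

theorem mem_closedNbhd_self (v : V) : v ∈ closedNbhd G v := mem_insert_self v _

theorem isISet_univ_of_not_hasClosedTwins (hCT : ¬ HasClosedTwins G) : IsISet G univ := by
  intro u v h
  rw [inter_univ, inter_univ] at h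
  by_contra huv
  have hu : u ∈ closedNbhd G v := h ▸ mem_closedNbhd_self u
  have hadj : G.Adj u v := by
    rcases mem_insert.mp hu with rfl | hu
    · exact absurd rfl huv
    · exact ((G.mem_neighborFinset v u).mp hu).symm
  exact hCT ⟨u, v, huv, hadj, h⟩

theorem IsISet.mono {C D : Finset V} (hC : IsISet G C) (hCD : C ⊆ D) : IsISet G D := by
  intro u v h
  apply hC
  rw [← inter_eq_right.mpr hCD, ← inter_assoc, ← inter_assoc, h]

/-- Two vertices with empty trace on an I-set cannot be separated by it, so an I-set fails to
dominate at most one vertex; adding that vertex yields an ID-code. -/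
theorem IsISet.exists_isDomSet_card_le_succ {C : Finset V} (hC : IsISet G C) :
    ∃ D : Finset V, IsDomSet G D ∧ IsISet G D ∧ D.card ≤ C.card + 1 := by
  by_cases hdom : IsDomSet G C
  · exact ⟨C, hdom, hC, C.card.le_succ⟩
  obtain ⟨v, hv⟩ : ∃ v, closedNbhd G v ∩ C = ∅ := by
    simpa [IsDomSet, not_nonempty_iff_eq_empty] using hdom
  refine ⟨insert v C, fun u => ?_, hC.mono (subset_insert v C), card_insert_le v C⟩
  by_cases huv : u = v
  · exact ⟨v, mem_inter.mpr ⟨huv ▸ mem_closedNbhd_self u, mem_insert_self v C⟩⟩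
  · obtain ⟨w, hw⟩ := nonempty_iff_ne_empty.mpr fun hu => huv (hC u v (hu.trans hv.symm))
    exact ⟨w, inter_subset_inter_left (subset_insert v C) hw⟩

end SepDom

open SepDom

theorem id_le_i_add_one {V : Type*} [Fintype V] [DecidableEq V]
    (G : SimpleGraph V) [DecidableRel G.Adj] (hCT : ¬ HasClosedTwins G) :
    (∃ C : Finset V, IsDomSet G C ∧ IsISet G C) ∧ idNum G ≤ iNum G + 1 := by
  obtain ⟨C, hC, hCcard⟩ : iNum G ∈ {n | ∃ C : Finset V, IsISet G C ∧ C.card = n} :=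
    Nat.sInf_mem ⟨_, univ, isISet_univ_of_not_hasClosedTwins hCT, rfl⟩
  obtain ⟨D, hDdom, hDsep, hDcard⟩ := hC.exists_isDomSet_card_le_succ
  refine ⟨⟨D, hDdom, hDsep⟩, ?_⟩
  calc idNum G ≤ D.card := Nat.sInf_le ⟨D, hDdom, hDsep, rfl⟩
    _ ≤ iNum G + 1 := hCcard ▸ hDcard
end

section
/- For every finite simple graph G without isolated vertices, G has an LTD-code and the LTD-number of G is at most twice the L-number of G, i.e., γ^LTD(G) ≤ 2·γ^L(G). -/
open Finset

/-!
Take a minimum L-set `L`. Locating forces at most one vertex `w ∉ L` to have no neighbour in `L`;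
if it exists, add a neighbour `x` of `w`: it lies outside `L` and, being located apart from `w`,
has a neighbour `c₀ ∈ L`. The resulting set `C` dominates every vertex outside it, and the vertices
of `C` without a neighbour in `C` lie in `L \ {c₀}` (in `L` if there is no `w`). Adding one neighbour
of each of them gives a total-dominating superset of size at most `2|L|`, and supersets of L-sets
are L-sets.
-/

namespace SepDom

variable {V : Type*} [Fintype V] [DecidableEq V] {G : SimpleGraph V} [DecidableRel G.Adj]

def isolatedIn (G : SimpleGraph V) [DecidableRel G.Adj] (C : Finset V) : Finset V :=
  C.filter fun c => G.neighborFinset c ∩ C = ∅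

lemma IsLSet.mono {L D : Finset V} (hL : IsLSet G L) (hLD : L ⊆ D) : IsLSet G D := by
  intro u hu v hv huv
  refine hL u (fun h => hu (hLD h)) v (fun h => hv (hLD h)) ?_
  rw [← inter_eq_right.mpr hLD, ← inter_assoc, ← inter_assoc, huv]

lemma IsLSet.eq_of_inter_eq_empty {L : Finset V} (hL : IsLSet G L) {u v : V} (hu : u ∉ L)
    (hv : v ∉ L) (hNu : G.neighborFinset u ∩ L = ∅) (hNv : G.neighborFinset v ∩ L = ∅) :
    u = v :=
  hL u hu v hv (hNu.trans hNv.symm)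

lemma exists_isLSet_card_eq_lNum (G : SimpleGraph V) [DecidableRel G.Adj] :
    ∃ L : Finset V, IsLSet G L ∧ L.card = lNum G :=
  Nat.sInf_mem (s := {n | ∃ C : Finset V, IsLSet G C ∧ C.card = n})
    ⟨_, univ, fun u hu => absurd (mem_univ u) hu, rfl⟩

lemma ltdNum_le_card {D : Finset V} (hTD : IsTotalDomSet G D) (hL : IsLSet G D) :
    ltdNum G ≤ D.card :=
  Nat.sInf_le ⟨D, hTD, hL, rfl⟩

lemma exists_isTotalDomSet_superset (hdeg : ∀ v, (G.neighborFinset v).Nonempty) {C : Finset V}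
    (hC : ∀ v ∉ C, (G.neighborFinset v ∩ C).Nonempty) :
    ∃ D, C ⊆ D ∧ IsTotalDomSet G D ∧ D.card ≤ C.card + (isolatedIn G C).card := by
  choose g hg using hdeg
  refine ⟨C ∪ (isolatedIn G C).image g, subset_union_left, fun v => ?_, ?_⟩
  · by_cases hv : (G.neighborFinset v ∩ C).Nonempty
    · exact hv.mono (inter_subset_inter_left subset_union_left)
    · have hvC : v ∈ C := by by_contra h; exact hv (hC v h)
      have hvI : v ∈ isolatedIn G C := mem_filter.mpr ⟨hvC, not_nonempty_iff_eq_empty.mp hv⟩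
      exact ⟨g v, mem_inter.mpr ⟨hg v, mem_union_right _ (mem_image_of_mem g hvI)⟩⟩
  · exact (card_union_le _ _).trans (Nat.add_le_add_left card_image_le _)

lemma IsLSet.exists_dominating_superset (hdeg : ∀ v, (G.neighborFinset v).Nonempty)
    {L : Finset V} (hL : IsLSet G L) :
    ∃ C, L ⊆ C ∧ (∀ v ∉ C, (G.neighborFinset v ∩ C).Nonempty) ∧
      C.card + (isolatedIn G C).card ≤ 2 * L.card := by
  by_cases hw : ∃ w ∉ L, G.neighborFinset w ∩ L = ∅
  · obtain ⟨w, hwL, hwN⟩ := hw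
    obtain ⟨x, hx⟩ := hdeg w
    have hxw : G.Adj w x := (G.mem_neighborFinset w x).mp hx
    have hxL : x ∉ L := fun h => eq_empty_iff_forall_notMem.mp hwN x (mem_inter.mpr ⟨hx, h⟩)
    obtain ⟨c₀, hc₀⟩ : (G.neighborFinset x ∩ L).Nonempty := by
      rw [nonempty_iff_ne_empty]
      exact fun h => hxw.ne (hL.eq_of_inter_eq_empty hwL hxL hwN h)
    obtain ⟨hxc₀, hc₀L⟩ := mem_inter.mp hc₀
    have hc₀x : x ∈ G.neighborFinset c₀ ∩ insert x L :=
      mem_inter.mpr ⟨(G.mem_neighborFinset _ _).mpr ((G.mem_neighborFinset _ _).mp hxc₀).symm,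
        mem_insert_self _ _⟩
    refine ⟨insert x L, subset_insert _ _, fun v hv => ?_, ?_⟩
    · have hvL : v ∉ L := fun h => hv (mem_insert_of_mem h)
      by_cases hvN : (G.neighborFinset v ∩ L).Nonempty
      · exact hvN.mono (inter_subset_inter_left (subset_insert _ _))
      · obtain rfl := hL.eq_of_inter_eq_empty hvL hwL (not_nonempty_iff_eq_empty.mp hvN) hwN
        exact ⟨x, mem_inter.mpr ⟨hx, mem_insert_self _ _⟩⟩
    · have hsub : isolatedIn G (insert x L) ⊆ L.erase c₀ := by
        intro c hc
        obtain ⟨hcC, hcN⟩ := mem_filter.mp hc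
        have hcx : c ≠ x := by
          rintro rfl
          exact eq_empty_iff_forall_notMem.mp hcN c₀ (mem_inter.mpr ⟨hxc₀, mem_insert_of_mem hc₀L⟩)
        refine mem_erase.mpr ⟨?_, (mem_insert.mp hcC).resolve_left hcx⟩
        rintro rfl
        exact eq_empty_iff_forall_notMem.mp hcN x hc₀x
      have hcard := card_le_card hsub
      rw [card_erase_of_mem hc₀L] at hcard
      have := card_insert_le x L
      have := card_pos.mpr ⟨c₀, hc₀L⟩
      omega
  · push Not at hw
    refine ⟨L, subset_rfl, hw, ?_⟩
    have := card_le_card (filter_subset (fun c => G.neighborFinset c ∩ L = ∅) L)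
    rw [isolatedIn]
    omega

end SepDom

open SepDom

theorem ltd_le_two_mul_l {V : Type*} [Fintype V] [DecidableEq V]
    (G : SimpleGraph V) [DecidableRel G.Adj] (hIso : ¬ HasIsolated G) :
    (∃ C : Finset V, IsTotalDomSet G C ∧ IsLSet G C) ∧ ltdNum G ≤ 2 * lNum G := by
  have hdeg : ∀ v, (G.neighborFinset v).Nonempty :=
    fun v => nonempty_iff_ne_empty.mpr fun h => hIso ⟨v, h⟩
  obtain ⟨L, hL, hLcard⟩ := exists_isLSet_card_eq_lNum G
  obtain ⟨C, hLC, hCdom, hCcard⟩ := hL.exists_dominating_superset hdeg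
  obtain ⟨D, hCD, hTD, hDcard⟩ := exists_isTotalDomSet_superset hdeg hCdom
  have hDL : IsLSet G D := hL.mono (hLC.trans hCD)
  refine ⟨⟨D, hTD, hDL⟩, ?_⟩
  calc ltdNum G ≤ D.card := ltdNum_le_card hTD hDL
    _ ≤ 2 * lNum G := by omega
end

section
/- For every integer k ≥ 4, the thin headless spider H_k satisfies γ^F(H_k) = 2k − 2. -/
open Finset

open SepDom

/-- The thin headless spider `H_k`: vertices `Sum.inl i` form the clique `Q`,
vertices `Sum.inr i` form the stable set `S`, and `q_i` is adjacent to `s_j` iff `i = j`. -/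
def thinSpider (k : ℕ) : SimpleGraph (Fin k ⊕ Fin k) where
  Adj u v :=
    match u, v with
    | Sum.inl i, Sum.inl j => i ≠ j
    | Sum.inl i, Sum.inr j => i = j
    | Sum.inr i, Sum.inl j => i = j
    | Sum.inr _, Sum.inr _ => False
  symm := by
    constructor
    rintro (i | i) (j | j) h
    · exact Ne.symm h
    · exact Eq.symm h
    · exact Eq.symm h
    · exact h
  loopless := by
    constructor
    rintro (i | i) h
    · exact h rfl
    · exact h

instance thinSpider.adjDecidable (k : ℕ) : DecidableRel (thinSpider k).Adj := by
  rintro (i | i) (j | j)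
  · exact inferInstanceAs (Decidable (i ≠ j))
  · exact inferInstanceAs (Decidable (i = j))
  · exact inferInstanceAs (Decidable (i = j))
  · exact inferInstanceAs (Decidable False)

/-!
Deleting `q_o` and `s_o` leaves an F-set: two vertices on the same side are told apart by `q_l`
or `s_l`, where `l ≠ o` is one of their two indices, and `q_i`, `s_j` by some `q_m` with
`m ∉ {o, i, j}`, which exists because `k ≥ 4`. Conversely, an F-set `C` misses at most one vertex
of `Q`, as `q_i, q_j ∉ C` give `N(s_i) ∩ C = N(s_j) ∩ C = ∅`, and at most one vertex of `S`, as
`s_i, s_j ∉ C` give `N[q_i] ∩ C = N[q_j] ∩ C = Q ∩ C`.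
-/

open Sum

lemma Finset.injective_inter_of_pairwise_xor {V : Type*} [DecidableEq V] {N : V → Finset V}
    {C : Finset V} (h : Pairwise fun u v => ∃ w ∈ C, Xor (w ∈ N u) (w ∈ N v)) :
    Function.Injective fun v => N v ∩ C := by
  intro u v huv
  by_contra hne
  obtain ⟨w, hwC, hxor⟩ := h hne
  have hw : w ∈ N u ↔ w ∈ N v := by
    simpa [hwC] using congrArg (w ∈ ·) huv
  rcases hxor with ⟨hu, hv⟩ | ⟨hv, hu⟩
  · exact hv (hw.mp hu)
  · exact hu (hw.mpr hv)

namespace SepDom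

lemma fNum_eq_card {V : Type*} [Fintype V] [DecidableEq V] {G : SimpleGraph V}
    [DecidableRel G.Adj] {C : Finset V} (hC : IsFSet G C)
    (hmin : ∀ D, IsFSet G D → C.card ≤ D.card) : fNum G = C.card :=
  le_antisymm (Nat.sInf_le ⟨C, hC, rfl⟩) <|
    le_csInf ⟨_, C, hC, rfl⟩ fun _ ⟨D, hD, hcard⟩ => hcard ▸ hmin D hD

end SepDom

lemma Fin.exists_notMem_of_card_lt {k : ℕ} {s : Finset (Fin k)} (hs : s.card < k) :
    ∃ m, m ∉ s := by
  obtain ⟨m, -, hm⟩ := exists_mem_notMem_of_card_lt_card (s := s) (t := univ)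
    (by rwa [card_univ, Fintype.card_fin])
  exact ⟨m, hm⟩

lemma Fin.exists_ne_xor_eq {k : ℕ} (o : Fin k) {i j : Fin k} (hij : i ≠ j) :
    ∃ l ≠ o, Xor (l = i) (l = j) := by
  by_cases hio : i = o
  · exact ⟨j, hio ▸ hij.symm, by simp [hij.symm]⟩
  · exact ⟨i, hio, by simp [hij]⟩

namespace thinSpider

variable {k : ℕ}

@[simp] lemma adj_inl_inl (i j : Fin k) : (thinSpider k).Adj (inl i) (inl j) ↔ i ≠ j := Iff.rfl

@[simp] lemma adj_inl_inr (i j : Fin k) : (thinSpider k).Adj (inl i) (inr j) ↔ i = j := Iff.rfl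

@[simp] lemma adj_inr_inl (i j : Fin k) : (thinSpider k).Adj (inr i) (inl j) ↔ i = j := Iff.rfl

@[simp] lemma not_adj_inr_inr (i j : Fin k) : ¬(thinSpider k).Adj (inr i) (inr j) := id

lemma neighborFinset_inr (i : Fin k) : (thinSpider k).neighborFinset (inr i) = {inl i} := by
  ext (j | j) <;> simp [eq_comm]

lemma closedNbhd_inl (i : Fin k) :
    closedNbhd (thinSpider k) (inl i) = insert (inr i) (univ.map .inl) := by
  ext (j | j) <;> simp [closedNbhd, eq_comm, em]

lemma card_compl_toLeft_le_one {C : Finset (Fin k ⊕ Fin k)} (hC : IsOSet (thinSpider k) C) :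
    C.toLeftᶜ.card ≤ 1 := by
  refine card_le_one.mpr fun i hi j hj => inr_injective <| hC _ _ ?_
  simp_all [neighborFinset_inr]

lemma card_compl_toRight_le_one {C : Finset (Fin k ⊕ Fin k)} (hC : IsISet (thinSpider k) C) :
    C.toRightᶜ.card ≤ 1 := by
  refine card_le_one.mpr fun i hi j hj => inl_injective <| hC _ _ ?_
  simp_all [closedNbhd_inl, insert_inter_of_notMem]

lemma two_mul_sub_two_le_card {C : Finset (Fin k ⊕ Fin k)} (hC : IsFSet (thinSpider k) C) :
    2 * k - 2 ≤ C.card := by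
  have hl := card_compl_toLeft_le_one hC.1
  have hr := card_compl_toRight_le_one hC.2
  rw [card_compl, Fintype.card_fin] at hl hr
  rw [← card_toLeft_add_card_toRight]
  omega

lemma isOSet_compl_pair (hk : 4 ≤ k) (o : Fin k) : IsOSet (thinSpider k) {inl o, inr o}ᶜ := by
  refine injective_inter_of_pairwise_xor ?_
  rintro (i | i) (j | j) hij
  · obtain ⟨l, hlo, hl⟩ := Fin.exists_ne_xor_eq o (ne_of_apply_ne inl hij)
    exact ⟨inr l, by simp [hlo], by simpa [eq_comm] using hl⟩
  · obtain ⟨m, hm⟩ := Fin.exists_notMem_of_card_lt (s := {o, i, j}) (card_le_three.trans_lt hk)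
    obtain ⟨hmo, hmi, hmj⟩ : m ≠ o ∧ m ≠ i ∧ m ≠ j := by simpa [not_or] using hm
    exact ⟨inl m, by simp [hmo], by simp [xor_def, hmi.symm, hmj.symm]⟩
  · obtain ⟨m, hm⟩ := Fin.exists_notMem_of_card_lt (s := {o, i, j}) (card_le_three.trans_lt hk)
    obtain ⟨hmo, hmi, hmj⟩ : m ≠ o ∧ m ≠ i ∧ m ≠ j := by simpa [not_or] using hm
    exact ⟨inl m, by simp [hmo], by simp [xor_def, hmi.symm, hmj.symm]⟩
  · obtain ⟨l, hlo, hl⟩ := Fin.exists_ne_xor_eq o (ne_of_apply_ne inr hij)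
    exact ⟨inl l, by simp [hlo], by simpa [eq_comm] using hl⟩

lemma isISet_compl_pair (hk : 3 ≤ k) (o : Fin k) : IsISet (thinSpider k) {inl o, inr o}ᶜ := by
  refine injective_inter_of_pairwise_xor ?_
  rintro (i | i) (j | j) hij
  · obtain ⟨l, hlo, hl⟩ := Fin.exists_ne_xor_eq o (ne_of_apply_ne inl hij)
    exact ⟨inr l, by simp [hlo], by simpa [closedNbhd, eq_comm] using hl⟩
  · obtain ⟨m, hm⟩ := Fin.exists_notMem_of_card_lt (s := {o, j}) (card_le_two.trans_lt hk)
    obtain ⟨hmo, hmj⟩ : m ≠ o ∧ m ≠ j := by simpa [not_or] using hm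
    exact ⟨inl m, by simp [hmo], by simp [closedNbhd, xor_def, hmj.symm, eq_comm, em]⟩
  · obtain ⟨m, hm⟩ := Fin.exists_notMem_of_card_lt (s := {o, i}) (card_le_two.trans_lt hk)
    obtain ⟨hmo, hmi⟩ : m ≠ o ∧ m ≠ i := by simpa [not_or] using hm
    exact ⟨inl m, by simp [hmo], by simp [closedNbhd, xor_def, hmi.symm, eq_comm, em]⟩
  · obtain ⟨l, hlo, hl⟩ := Fin.exists_ne_xor_eq o (ne_of_apply_ne inr hij)
    exact ⟨inr l, by simp [hlo], by simpa [closedNbhd, eq_comm] using hl⟩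

lemma card_compl_pair (o : Fin k) :
    ({inl o, inr o}ᶜ : Finset (Fin k ⊕ Fin k)).card = 2 * k - 2 := by
  rw [card_compl, card_pair inl_ne_inr, Fintype.card_sum, Fintype.card_fin]
  omega

end thinSpider

theorem thinSpider_fNum (k : ℕ) (hk : 4 ≤ k) :
    fNum (thinSpider k) = 2 * k - 2 := by
  have o : Fin k := ⟨0, by omega⟩
  have hC : IsFSet (thinSpider k) {inl o, inr o}ᶜ :=
    ⟨thinSpider.isOSet_compl_pair hk o, thinSpider.isISet_compl_pair (by omega) o⟩
  rw [← thinSpider.card_compl_pair o, fNum_eq_card hC]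
  exact fun D hD => thinSpider.card_compl_pair o ▸ thinSpider.two_mul_sub_two_le_card hD
end
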